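/- arXiv:2004.07231 — 2 statements merged into one kernel-verified Lean document; each statement's English description precedes it below -/
import Mathlib

section
/- Let (Ω, μ) be a probability space, let S : Ω → ℝ be a random variable whose law is the uniform distribution on [0,1], let Ŝ : Ω → ℝ be any random variable, let δ > 0 and let M ≥ 1 be an integer. Then μ{ ω : ⌈M·Ŝ(ω)⌉ ≠ ⌈M·S(ω)⌉ and |Ŝ(ω) − S(ω)| ≤ δ } ≤ 2δM. -/
/-!
Put `k = ⌈M S⌉`, so that `S` lies in the quantization cell `((k-1)/M, k/M]`. If `Ŝ` is within `δ`
of `S` but is quantized differently, it has left this cell, so `S` lies within `δ` of one of the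
cell's endpoints. For `S ∈ (0,1]` the index `k` ranges over `1, …, M`, and these `M` boundary layers,
each of total length `2δ`, have Lebesgue measure at most `2δM`; the law of `S` is dominated by
Lebesgue measure.
-/

open MeasureTheory Set

/-- The `δ`-layer at the two endpoints of the cell `((k-1)/c, k/c]` on which `⌈c s⌉ = k`. -/
def ceilCellBoundary (c : ℝ) (k : ℤ) (δ : ℝ) : Set ℝ :=
  Icc ((k - 1) / c) ((k - 1) / c + δ) ∪ Icc (k / c - δ) (k / c)

def quantizationBoundaryLayer (M : ℕ) (δ : ℝ) : Set ℝ :=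
  ⋃ k ∈ Finset.Icc (1 : ℤ) M, ceilCellBoundary M k δ

lemma mem_ceilCellBoundary_of_ceil_ne {c s t δ : ℝ} (hc : 0 < c) (hne : ⌈c * t⌉ ≠ ⌈c * s⌉)
    (hst : |t - s| ≤ δ) : s ∈ ceilCellBoundary c ⌈c * s⌉ δ := by
  obtain ⟨hts, hst'⟩ := abs_sub_le_iff.mp hst
  have hs_le : s ≤ ⌈c * s⌉ / c := (le_div_iff₀' hc).mpr (Int.le_ceil _)
  rcases hne.lt_or_gt with hlt | hgt
  · have hs_gt : (⌈c * s⌉ - 1) / c < s :=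
      (div_lt_iff₀' hc).mpr (by exact_mod_cast Int.lt_ceil.mp (sub_one_lt ⌈c * s⌉))
    have ht_le : t ≤ (⌈c * s⌉ - 1) / c :=
      (le_div_iff₀' hc).mpr (by exact_mod_cast Int.ceil_le.mp (Int.le_sub_one_of_lt hlt))
    exact Or.inl ⟨hs_gt.le, by linarith⟩
  · have ht_gt : ⌈c * s⌉ / c < t := (div_lt_iff₀' hc).mpr (Int.lt_ceil.mp hgt)
    exact Or.inr ⟨by linarith, hs_le⟩

lemma volume_ceilCellBoundary_le (c : ℝ) (k : ℤ) {δ : ℝ} (hδ : 0 ≤ δ) :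
    volume (ceilCellBoundary c k δ) ≤ ENNReal.ofReal (2 * δ) := by
  calc volume (ceilCellBoundary c k δ)
      ≤ volume (Icc ((k - 1) / c) ((k - 1) / c + δ)) + volume (Icc (k / c - δ) (k / c)) :=
        measure_union_le _ _
    _ = ENNReal.ofReal (2 * δ) := by
        rw [Real.volume_Icc, Real.volume_Icc, add_sub_cancel_left, sub_sub_cancel,
          ← ENNReal.ofReal_add hδ hδ, two_mul]

lemma measurableSet_quantizationBoundaryLayer (M : ℕ) (δ : ℝ) :
    MeasurableSet (quantizationBoundaryLayer M δ) :=
  Finset.measurableSet_biUnion _ fun _ _ => measurableSet_Icc.union measurableSet_Icc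

lemma volume_quantizationBoundaryLayer_le (M : ℕ) {δ : ℝ} (hδ : 0 ≤ δ) :
    volume (quantizationBoundaryLayer M δ) ≤ ENNReal.ofReal (2 * δ * M) := by
  calc volume (quantizationBoundaryLayer M δ)
      ≤ ∑ k ∈ Finset.Icc (1 : ℤ) M, volume (ceilCellBoundary M k δ) :=
        measure_biUnion_finset_le _ _
    _ ≤ ∑ _k ∈ Finset.Icc (1 : ℤ) M, ENNReal.ofReal (2 * δ) :=
        Finset.sum_le_sum fun k _ => volume_ceilCellBoundary_le M k hδ
    _ = ENNReal.ofReal (2 * δ * M) := by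
        rw [Finset.sum_const, Int.card_Icc, add_sub_cancel_right, Int.toNat_natCast,
          nsmul_eq_mul, ← ENNReal.ofReal_natCast, ← ENNReal.ofReal_mul (Nat.cast_nonneg M),
          mul_comm]

lemma ceil_mul_mem_Icc_of_mem_Ioc {M : ℕ} (hM : 1 ≤ M) {s : ℝ} (hs : s ∈ Ioc 0 1) :
    ⌈(M : ℝ) * s⌉ ∈ Finset.Icc (1 : ℤ) M := by
  have hMpos : (0 : ℝ) < M := by exact_mod_cast hM
  refine Finset.mem_Icc.mpr ⟨Int.one_le_ceil_iff.mpr (mul_pos hMpos hs.1), ?_⟩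
  exact Int.ceil_le.mpr (by simpa using mul_le_of_le_one_right hMpos.le hs.2)

lemma mem_quantizationBoundaryLayer_of_ceil_ne {M : ℕ} (hM : 1 ≤ M) {s t δ : ℝ}
    (hs : s ∈ Ioc 0 1) (hne : ⌈(M : ℝ) * t⌉ ≠ ⌈(M : ℝ) * s⌉) (hst : |t - s| ≤ δ) :
    s ∈ quantizationBoundaryLayer M δ :=
  mem_biUnion (ceil_mul_mem_Icc_of_mem_Ioc hM hs)
    (mem_ceilCellBoundary_of_ceil_ne (by exact_mod_cast hM) hne hst)

theorem quantization_boundary_bound_general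
    {Ω : Type*} [MeasurableSpace Ω] (μ : Measure Ω) [IsProbabilityMeasure μ]
    (S Shat : Ω → ℝ) (hS : Measurable S)
    (hlaw : μ.map S = volume.restrict (Set.Icc (0:ℝ) 1))
    (δ : ℝ) (hδ : 0 < δ) (M : ℕ) (hM : 1 ≤ M) :
    μ {ω | ⌈(M:ℝ) * Shat ω⌉ ≠ ⌈(M:ℝ) * S ω⌉ ∧ |Shat ω - S ω| ≤ δ}
      ≤ ENNReal.ofReal (2 * δ * M) := by
  set B := (Ioc (0 : ℝ) 1)ᶜ ∪ quantizationBoundaryLayer M δ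
  have hB : MeasurableSet B :=
    measurableSet_Ioc.compl.union (measurableSet_quantizationBoundaryLayer M δ)
  have hsub : {ω | ⌈(M:ℝ) * Shat ω⌉ ≠ ⌈(M:ℝ) * S ω⌉ ∧ |Shat ω - S ω| ≤ δ} ⊆ S ⁻¹' B := by
    rintro ω ⟨hne, hclose⟩
    by_cases hS01 : S ω ∈ Ioc 0 1
    · exact Or.inr (mem_quantizationBoundaryLayer_of_ceil_ne hM hS01 hne hclose)
    · exact Or.inl hS01
  -- `(0,1]` instead of `[0,1]` excludes `S = 0`, whose cell index `0` is not among `1, …, M`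
  have hlaw' : μ.map S = volume.restrict (Ioc 0 1) :=
    hlaw.trans (Measure.restrict_congr_set Ioc_ae_eq_Icc).symm
  calc μ _ ≤ μ (S ⁻¹' B) := measure_mono hsub
    _ = volume (B ∩ Ioc 0 1) := by
        rw [← Measure.map_apply hS hB, hlaw', Measure.restrict_apply hB]
    _ ≤ volume (quantizationBoundaryLayer M δ) :=
        measure_mono fun s ⟨hsB, hs01⟩ => hsB.resolve_left (not_not_intro hs01)
    _ ≤ ENNReal.ofReal (2 * δ * M) := volume_quantizationBoundaryLayer_le M hδ.le

/-- boundary-layer bound for a uniform target on `[0,1]`. -/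
theorem quantization_boundary_bound
    {Ω : Type*} [MeasurableSpace Ω] (μ : Measure Ω) [IsProbabilityMeasure μ]
    (S Shat : Ω → ℝ) (hS : Measurable S) (hShat : Measurable Shat)
    (hlaw : μ.map S = volume.restrict (Set.Icc (0:ℝ) 1))
    (δ : ℝ) (hδ : 0 < δ) (M : ℕ) (hM : 1 ≤ M) :
    μ {ω | ⌈(M:ℝ) * Shat ω⌉ ≠ ⌈(M:ℝ) * S ω⌉ ∧ |Shat ω - S ω| ≤ δ}
      ≤ ENNReal.ofReal (2 * δ * M) :=
  quantization_boundary_bound_general μ S Shat hS hlaw δ hδ M hM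
end

section
/- Let (Ω, μ) be a probability space, d ≥ 1 an integer, and S = (S₁,…,S_d) : Ω → ℝ^d a random vector whose law is the uniform distribution on [0,1]^d. Let Ŝ = (Ŝ₁,…,Ŝ_d) : Ω → ℝ^d be any random vector, let δ > 0, β > 0, ε ∈ [0,1], and set M̃ := ⌊β/δ⌋. If μ{ ∃ i ∈ [d] : |Ŝ_i − S_i| > δ } ≤ ε, then μ{ ∃ i ∈ [d] : ⌈M̃·Ŝ_i⌉ ≠ ⌈M̃·S_i⌉ } ≤ ε + 2dβ. -/
/-!
For `M = ⌊β/δ⌋` and `|Ŝᵢ - Sᵢ| ≤ δ` we get `|M Ŝᵢ - M Sᵢ| ≤ M δ ≤ β`, so `⌈M Ŝᵢ⌉ ≠ ⌈M Sᵢ⌉`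
forces `M Sᵢ` to lie within `β` of an integer. For `Sᵢ` uniform on `[0, 1]` this has
probability at most `2β`: each of the `M` unit cells of `[0, M]` meets the closed
`β`-neighbourhood of `ℤ` in two intervals of length `β`, and rescaling by `1/M` divides lengths
by `M`. A union bound over the large-error event and the `d` coordinates gives `ε + 2dβ`.
-/

open MeasureTheory Set Metric

def intClosedNbhd (r : ℝ) : Set ℝ := ⋃ k : ℤ, closedBall (k : ℝ) r

lemma measurableSet_intClosedNbhd (r : ℝ) : MeasurableSet (intClosedNbhd r) :=
  .iUnion fun _ ↦ measurableSet_closedBall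

lemma mem_intClosedNbhd {r t : ℝ} : t ∈ intClosedNbhd r ↔ ∃ k : ℤ, |t - k| ≤ r := by
  simp [intClosedNbhd, Real.dist_eq]

lemma mem_intClosedNbhd_of_ceil_ne {a b r : ℝ} (h : |a - b| ≤ r) (hne : ⌈a⌉ ≠ ⌈b⌉) :
    b ∈ intClosedNbhd r := by
  rw [mem_intClosedNbhd]
  rcases hne.lt_or_gt with hab | hba
  · refine ⟨⌈a⌉, abs_le.2 ⟨?_, ?_⟩⟩
    · linarith [Int.lt_ceil.1 hab, (abs_nonneg (a - b)).trans h]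
    · linarith [Int.le_ceil a, (abs_le.1 h).1]
  · refine ⟨⌈b⌉, abs_le.2 ⟨?_, ?_⟩⟩
    · linarith [Int.lt_ceil.1 hba, (abs_le.1 h).2]
    · linarith [Int.le_ceil b, (abs_nonneg (a - b)).trans h]

lemma intClosedNbhd_inter_Icc_subset {M : ℕ} (hM : 0 < M) (r : ℝ) :
    intClosedNbhd r ∩ Icc 0 M ⊆
      ⋃ j ∈ Finset.range M, (Icc (j : ℝ) (j + r) ∪ Icc (j + 1 - r) (j + 1)) := by
  rintro t ⟨ht, ht0, htM⟩
  obtain ⟨k, hk⟩ := mem_intClosedNbhd.1 ht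
  set j := min ⌊t⌋₊ (M - 1)
  have hjt : (j : ℝ) ≤ t := (Nat.cast_le.2 (min_le_left _ _)).trans (Nat.floor_le ht0)
  have htj : t ≤ j + 1 := by
    rcases le_total ⌊t⌋₊ (M - 1) with h | h
    · simpa [j, h] using (Nat.lt_floor_add_one t).le
    · simpa [j, h, Nat.cast_sub hM, Nat.one_le_cast.2 hM] using htM
  refine mem_biUnion (x := j) (Finset.mem_range.2 (by omega)) ?_
  rw [abs_le] at hk
  rcases le_or_gt k j with hkj | hjk
  · have : (k : ℝ) ≤ j := by exact_mod_cast hkj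
    exact .inl ⟨hjt, by linarith⟩
  · have : (j : ℝ) + 1 ≤ k := by exact_mod_cast hjk
    exact .inr ⟨by linarith, htj⟩

lemma volume_intClosedNbhd_inter_Icc_le {M : ℕ} (hM : 0 < M) {r : ℝ} (hr : 0 ≤ r) :
    volume (intClosedNbhd r ∩ Icc 0 M) ≤ ENNReal.ofReal (2 * r * M) := by
  calc volume (intClosedNbhd r ∩ Icc 0 M)
      ≤ ∑ j ∈ Finset.range M, volume (Icc (j : ℝ) (j + r) ∪ Icc (j + 1 - r) (j + 1)) :=
        (measure_mono (intClosedNbhd_inter_Icc_subset hM r)).trans (measure_biUnion_finset_le _ _)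
    _ ≤ ∑ _j ∈ Finset.range M, (ENNReal.ofReal r + ENNReal.ofReal r) := by
        gcongr with j
        refine (measure_union_le _ _).trans_eq ?_
        simp only [Real.volume_Icc]
        ring_nf
    _ = ENNReal.ofReal (2 * r * M) := by
        rw [Finset.sum_const, Finset.card_range, nsmul_eq_mul, ← ENNReal.ofReal_add hr hr,
          ← ENNReal.ofReal_natCast, ← ENNReal.ofReal_mul (Nat.cast_nonneg _), mul_comm]
        ring_nf

lemma volume_restrict_Icc_preimage_mul_intClosedNbhd_le {M : ℕ} (hM : 0 < M) {r : ℝ}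
    (hr : 0 ≤ r) :
    volume.restrict (Icc 0 1) (((M : ℝ) * ·) ⁻¹' intClosedNbhd r) ≤ ENNReal.ofReal (2 * r) := by
  have hM' : (0 : ℝ) < M := Nat.cast_pos.2 hM
  have hpre : ((M : ℝ) * ·) ⁻¹' intClosedNbhd r ∩ Icc 0 1 =
      ((M : ℝ) * ·) ⁻¹' (intClosedNbhd r ∩ Icc 0 M) := by
    ext x
    simp only [mem_inter_iff, mem_preimage, mem_Icc, mul_nonneg_iff_of_pos_left hM',
      mul_le_iff_le_one_right hM']
  rw [Measure.restrict_apply ((measurableSet_intClosedNbhd r).preimage (measurable_const_mul _)),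
    hpre, Real.volume_preimage_mul_left hM'.ne']
  calc ENNReal.ofReal |(M : ℝ)⁻¹| * volume (intClosedNbhd r ∩ Icc 0 M)
      ≤ ENNReal.ofReal (M : ℝ)⁻¹ * ENNReal.ofReal (2 * r * M) := by
        rw [abs_of_pos (inv_pos.2 hM')]
        gcongr
        exact volume_intClosedNbhd_inter_Icc_le hM hr
    _ = ENNReal.ofReal (2 * r) := by
        rw [← ENNReal.ofReal_mul (inv_nonneg.2 hM'.le)]
        field_simp

lemma map_eval_volume_restrict_Icc {ι : Type*} [Fintype ι] (i : ι) :
    (volume.restrict (Icc (0 : ι → ℝ) 1)).map (Function.eval i) = volume.restrict (Icc 0 1) := by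
  have : IsProbabilityMeasure (volume.restrict (Icc (0 : ℝ) 1)) := ⟨by simp⟩
  rw [← pi_univ_Icc, volume_pi, Measure.restrict_pi_pi]
  exact (measurePreserving_eval _ i).map_eq

lemma measure_coord_mem_of_map_eq_volume_restrict_Icc {Ω ι : Type*} [MeasurableSpace Ω]
    [Fintype ι] {μ : Measure Ω} {S : Ω → ι → ℝ} (hS : Measurable S)
    (hlaw : μ.map S = volume.restrict (Icc 0 1)) (i : ι) {A : Set ℝ} (hA : MeasurableSet A) :
    μ {ω | S ω i ∈ A} = volume.restrict (Icc 0 1) A := by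
  rw [← map_eval_volume_restrict_Icc i, ← hlaw, Measure.map_map (measurable_pi_apply i) hS,
    Measure.map_apply ((measurable_pi_apply i).comp hS) hA]
  rfl

theorem excess_resolution_to_quantized_error_general
    {Ω : Type*} [MeasurableSpace Ω] (μ : Measure Ω)
    (d : ℕ)
    (S Shat : Ω → Fin d → ℝ) (hS : Measurable S)
    (hlaw : μ.map S = volume.restrict (Set.Icc (0 : Fin d → ℝ) 1))
    (δ β ε : ℝ) (hδ : 0 < δ) (hβ : 0 < β) (hε : ε ∈ Set.Icc (0:ℝ) 1)
    (herr : μ {ω | ∃ i, δ < |Shat ω i - S ω i|} ≤ ENNReal.ofReal ε) :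
    μ {ω | ∃ i, ⌈(⌊β/δ⌋ : ℝ) * Shat ω i⌉ ≠ ⌈(⌊β/δ⌋ : ℝ) * S ω i⌉}
      ≤ ENNReal.ofReal (ε + 2 * d * β) := by
  obtain ⟨M, hM⟩ := Int.eq_ofNat_of_zero_le (Int.floor_nonneg.2 (div_pos hβ hδ).le)
  have hMδ : (M : ℝ) * δ ≤ β := by
    simpa [hM, le_div_iff₀ hδ] using Int.floor_le (β / δ)
  rw [hM, Int.cast_natCast]
  rcases Nat.eq_zero_or_pos M with rfl | hM0
  · simp
  set A := ((M : ℝ) * ·) ⁻¹' intClosedNbhd β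
  have hsub : {ω | ∃ i, ⌈(M : ℝ) * Shat ω i⌉ ≠ ⌈(M : ℝ) * S ω i⌉} ⊆
      {ω | ∃ i, δ < |Shat ω i - S ω i|} ∪ ⋃ i, {ω | S ω i ∈ A} := by
    rintro ω ⟨i, hne⟩
    by_cases hclose : |Shat ω i - S ω i| ≤ δ
    · refine .inr (mem_iUnion.2 ⟨i, mem_intClosedNbhd_of_ceil_ne ?_ hne⟩)
      rw [← mul_sub, abs_mul, Nat.abs_cast]
      exact (mul_le_mul_of_nonneg_left hclose (Nat.cast_nonneg M)).trans hMδ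
    · exact .inl ⟨i, not_le.1 hclose⟩
  have hA : ∀ i, μ {ω | S ω i ∈ A} ≤ ENNReal.ofReal (2 * β) := fun i ↦ by
    rw [measure_coord_mem_of_map_eq_volume_restrict_Icc hS hlaw i
      ((measurableSet_intClosedNbhd β).preimage (measurable_const_mul _))]
    exact volume_restrict_Icc_preimage_mul_intClosedNbhd_le hM0 hβ.le
  calc _ ≤ μ {ω | ∃ i, δ < |Shat ω i - S ω i|} + μ (⋃ i, {ω | S ω i ∈ A}) :=
        (measure_mono hsub).trans (measure_union_le _ _)
    _ ≤ μ {ω | ∃ i, δ < |Shat ω i - S ω i|} + ∑ i, μ {ω | S ω i ∈ A} := by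
        gcongr
        exact measure_iUnion_fintype_le _ _
    _ ≤ ENNReal.ofReal ε + ∑ _i : Fin d, ENNReal.ofReal (2 * β) := by gcongr with i; exact hA i
    _ = ENNReal.ofReal (ε + 2 * d * β) := by
        rw [Finset.sum_const, Finset.card_univ, Fintype.card_fin, nsmul_eq_mul,
          ← ENNReal.ofReal_natCast, ← ENNReal.ofReal_mul (Nat.cast_nonneg _),
          ← ENNReal.ofReal_add hε.1 (by positivity), mul_left_comm, ← mul_assoc]

/-- converse reduction: from resolution to quantized decoding error. -/
theorem excess_resolution_to_quantized_error
    {Ω : Type*} [MeasurableSpace Ω] (μ : Measure Ω) [IsProbabilityMeasure μ]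
    (d : ℕ) (hd : 1 ≤ d)
    (S Shat : Ω → Fin d → ℝ) (hS : Measurable S) (hShat : Measurable Shat)
    (hlaw : μ.map S = volume.restrict (Set.Icc (0 : Fin d → ℝ) 1))
    (δ β ε : ℝ) (hδ : 0 < δ) (hβ : 0 < β) (hε : ε ∈ Set.Icc (0:ℝ) 1)
    (herr : μ {ω | ∃ i, δ < |Shat ω i - S ω i|} ≤ ENNReal.ofReal ε) :
    μ {ω | ∃ i, ⌈(⌊β/δ⌋ : ℝ) * Shat ω i⌉ ≠ ⌈(⌊β/δ⌋ : ℝ) * S ω i⌉}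
      ≤ ENNReal.ofReal (ε + 2 * d * β) :=
  excess_resolution_to_quantized_error_general μ d S Shat hS hlaw δ β ε hδ hβ hε herr
end
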